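/- Suppose that for all 1 ≤ t ≤ T, all u ∈ [0,1] and all f ∈ 𝓕, |E[f(X_{t,T})] − E[f(X_0(u))]| ≤ C(|t/T − u| + 1/T), and that sup_{f∈𝓕} sup_{w∈[0,1]} |E[f(X_0(w))]| ≤ M with w ↦ E[f(X_0(w))] measurable for each f. Then there is a constant C′, depending only on C and M, such that for all T ≥ 1: sup_{u∈[0,1]} sup_{f∈𝓕} | T^{−1} Σ_{t=1}^{⌊uT⌋} E[f(X_{t,T})] − ∫_0^u E[f(X_0(w))] dw | ≤ C′/T. In particular, √T · sup_{(u,v,f)∈Δ×𝓕} |E[D̂_T(u,v,f)] − D(u,v,f)| → 0 as T → ∞. -/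

import Mathlib

open MeasureTheory Filter Topology ProbabilityTheory
open scoped ENNReal NNReal BigOperators

noncomputable section

namespace GradualChangePaper

/-- The triangle `Δ = {(u,v) ∈ [0,1]² : v ≤ u}`. -/
def DeltaSet : Set (ℝ × ℝ) := {p | 0 ≤ p.2 ∧ p.2 ≤ p.1 ∧ p.1 ≤ 1}

variable {Ω : Type} [MeasurableSpace Ω] {d : ℕ} {F : Type} [PseudoMetricSpace F]

/-- Strict stationarity of a `ℤ`-indexed process: the joint law of
`(Y (t+1), …, Y (t+n))` does not depend on `t`. -/
def StrictlyStationary (P : Measure Ω) (Y : ℤ → Ω → (Fin d → ℝ)) : Prop :=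
  ∀ (n : ℕ) (t : ℤ),
    Measure.map (fun ω (i : Fin n) => Y (t + 1 + (i : ℤ)) ω) P =
      Measure.map (fun ω (i : Fin n) => Y (1 + (i : ℤ)) ω) P

/-- Condition (C1): local stationarity. -/
def CondC1 (P : Measure Ω) (X : ℕ → ℕ → Ω → (Fin d → ℝ))
    (Xap : ℝ → ℤ → Ω → (Fin d → ℝ)) (U : ℝ → ℕ → ℕ → Ω → ℝ) : Prop :=
  (∀ u ∈ Set.Icc (0:ℝ) 1, StrictlyStationary P (Xap u)) ∧
  ∃ ρ : ℝ, 0 < ρ ∧ ∃ C : ℝ, ∀ u ∈ Set.Icc (0:ℝ) 1, ∀ T t : ℕ, 1 ≤ t → t ≤ T →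
    (∫ ω, U u T t ω ^ ρ ∂P) ≤ C ∧
    (∀ᵐ ω ∂P, 0 ≤ U u T t ω ∧
      ‖X T t ω - Xap u (t : ℤ) ω‖ ≤ (|(t : ℝ) / T - u| + 1 / T) * U u T t ω)

/-- Condition (C2) with explicit mixing constants `Cmix` and `a`. -/
def CondC2With (P : Measure Ω) (X : ℕ → ℕ → Ω → (Fin d → ℝ)) (Cmix a : ℝ) : Prop :=
  0 < Cmix ∧ a ∈ Set.Ioo (0:ℝ) 1 ∧
  ∀ T t k : ℕ, 1 ≤ k → ∀ A B : Set Ω,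
    MeasurableSet[⨆ s ∈ Set.Icc 1 t, MeasurableSpace.comap (X T s) inferInstance] A →
    MeasurableSet[⨆ s ∈ Set.Icc (t + k) T, MeasurableSpace.comap (X T s) inferInstance] B →
    |(P (A ∩ B)).toReal - (P A).toReal * (P B).toReal| ≤ Cmix * a ^ k

/-- Condition (C2): strong mixing at a geometric rate. -/
def CondC2 (P : Measure Ω) (X : ℕ → ℕ → Ω → (Fin d → ℝ)) : Prop :=
  ∃ Cmix a : ℝ, CondC2With P X Cmix a

/-- Covering number of `F` at radius `w`: the minimal number of `dist`-balls of
radius `w` needed to cover `F`. -/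
def coveringNumber (F : Type) [PseudoMetricSpace F] (w : ℝ) : ℝ≥0∞ :=
  sInf {n : ℝ≥0∞ | ∃ s : Finset F, (s.card : ℝ≥0∞) = n ∧ ∀ f : F, ∃ g ∈ s, dist f g ≤ w}

/-- Condition (C3). -/
def CondC3 (P : Measure Ω) (X : ℕ → ℕ → Ω → (Fin d → ℝ))
    (ev : F → (Fin d → ℝ) → ℝ) (p : ℕ) (δ C : ℝ) : Prop :=
  TopologicalSpace.SeparableSpace F ∧ CompactSpace F ∧ (∀ f : F, Measurable (ev f)) ∧
  (∫⁻ w in Set.Ioc (0:ℝ) 1, coveringNumber F w ^ (1 / (p:ℝ)) ∂volume) < ⊤ ∧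
  (∃ Fbar : (Fin d → ℝ) → ℝ, (∀ (f : F) x, |ev f x| ≤ Fbar x) ∧
    ∀ T t : ℕ, 1 ≤ t → t ≤ T → (∫ ω, Fbar (X T t ω) ^ ((1 + δ) * (p:ℝ)) ∂P) ≤ C) ∧
  (∀ f f' : F, ∀ T t : ℕ, 1 ≤ t → t ≤ T →
    (∫ ω, |ev f (X T t ω) - ev f' (X T t ω)| ^ ((1 + δ) * (p:ℝ)) ∂P)
      ≤ C * dist f f' ^ ((1 + δ) * (p:ℝ)))

/-- Condition (C4). -/
def CondC4 (P : Measure Ω) (X : ℕ → ℕ → Ω → (Fin d → ℝ))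
    (Xap : ℝ → ℤ → Ω → (Fin d → ℝ)) (ev : F → (Fin d → ℝ) → ℝ) (C : ℝ) : Prop :=
  ∀ k : ℕ, (k = 1 ∨ k = 2) → ∀ f : F, ∀ T t : ℕ, 1 ≤ t → t ≤ T →
    ∀ u ∈ Set.Icc (0:ℝ) 1,
      (∫ ω, |ev f (X T t ω) - ev f (Xap u (t : ℤ) ω)| ^ k ∂P)
        ≤ C * (|(t : ℝ) / T - u| + 1 / T)

/-- The CUSUM statistic `D̂_T(u,v,f)` (with the convention `v/u = 0` for `u = 0`). -/
def Dhat (X : ℕ → ℕ → Ω → (Fin d → ℝ)) (ev : F → (Fin d → ℝ) → ℝ)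
    (T : ℕ) (u v : ℝ) (f : F) (ω : Ω) : ℝ :=
  (1 / (T:ℝ)) * ∑ t ∈ Finset.Icc 1 ⌊v * (T:ℝ)⌋₊, ev f (X T t ω)
    - (v / u) * ((1 / (T:ℝ)) * ∑ t ∈ Finset.Icc 1 ⌊u * (T:ℝ)⌋₊, ev f (X T t ω))

/-- The moment function `w ↦ E[f(X₀(w))]`. -/
def mfun (P : Measure Ω) (Xap : ℝ → ℤ → Ω → (Fin d → ℝ))
    (ev : F → (Fin d → ℝ) → ℝ) (f : F) (w : ℝ) : ℝ :=
  ∫ ω, ev f (Xap w 0 ω) ∂P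

/-- The population quantity `D(u,v,f)`. -/
def Dlim (P : Measure Ω) (Xap : ℝ → ℤ → Ω → (Fin d → ℝ))
    (ev : F → (Fin d → ℝ) → ℝ) (u v : ℝ) (f : F) : ℝ :=
  (∫ w in Set.Ioc (0:ℝ) v, mfun P Xap ev f w)
    - (v / u) * ∫ w in Set.Ioc (0:ℝ) u, mfun P Xap ev f w

/-- The empirical process `Ĥ_T(u,v,f) = √T (D̂_T(u,v,f) − D(u,v,f))`. -/
def Hhat (P : Measure Ω) (X : ℕ → ℕ → Ω → (Fin d → ℝ))
    (Xap : ℝ → ℤ → Ω → (Fin d → ℝ)) (ev : F → (Fin d → ℝ) → ℝ)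
    (T : ℕ) (u v : ℝ) (f : F) (ω : Ω) : ℝ :=
  Real.sqrt T * (Dhat X ev T u v f ω - Dlim P Xap ev u v f)

/-- The lagged covariance `c_l(w,f,f') = Cov(f(X₀(w)), f'(X_l(w)))`. -/
def clag (P : Measure Ω) (Xap : ℝ → ℤ → Ω → (Fin d → ℝ))
    (ev : F → (Fin d → ℝ) → ℝ) (w : ℝ) (f f' : F) (l : ℤ) : ℝ :=
  ∫ ω, (ev f (Xap w 0 ω) - ∫ ω', ev f (Xap w 0 ω') ∂P)
      * (ev f' (Xap w l ω) - ∫ ω', ev f' (Xap w l ω') ∂P) ∂P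

/-- The `l`-th term of the covariance kernel `K`. -/
def Kterm (P : Measure Ω) (Xap : ℝ → ℤ → Ω → (Fin d → ℝ))
    (ev : F → (Fin d → ℝ) → ℝ) (u v : ℝ) (f : F) (u' v' : ℝ) (f' : F) (l : ℤ) : ℝ :=
  (v * v' / (u * u')) * (∫ w in Set.Ioc (0:ℝ) (min u u'), clag P Xap ev w f f' l)
    - (v' / u') * (∫ w in Set.Ioc (0:ℝ) (min v u'), clag P Xap ev w f f' l)
    - (v / u) * (∫ w in Set.Ioc (0:ℝ) (min u v'), clag P Xap ev w f f' l)
    + ∫ w in Set.Ioc (0:ℝ) (min v v'), clag P Xap ev w f f' l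

/-- The covariance kernel `K((u,v,f),(u',v',f'))`. -/
def Kker (P : Measure Ω) (Xap : ℝ → ℤ → Ω → (Fin d → ℝ))
    (ev : F → (Fin d → ℝ) → ℝ) (u v : ℝ) (f : F) (u' v' : ℝ) (f' : F) : ℝ :=
  ∑' l : ℤ, Kterm P Xap ev u v f u' v' f' l

/-- `D̂sup_T(u) = sup_{f ∈ 𝓕} sup_{v ∈ [0,u]} |D̂_T(u,v,f)|`. -/
def DsupT (X : ℕ → ℕ → Ω → (Fin d → ℝ)) (ev : F → (Fin d → ℝ) → ℝ)
    (T : ℕ) (u : ℝ) (ω : Ω) : ℝ :=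
  sSup {x : ℝ | ∃ f : F, ∃ v ∈ Set.Icc (0:ℝ) u, x = |Dhat X ev T u v f ω|}

/-- `Dsup(u) = sup_{f ∈ 𝓕} sup_{v ∈ [0,u]} |D(u,v,f)|`. -/
def DsupLim (P : Measure Ω) (Xap : ℝ → ℤ → Ω → (Fin d → ℝ))
    (ev : F → (Fin d → ℝ) → ℝ) (u : ℝ) : ℝ :=
  sSup {x : ℝ | ∃ f : F, ∃ v ∈ Set.Icc (0:ℝ) u, x = |Dlim P Xap ev u v f|}

/-- The estimator `û₀(τ) = ∫₀¹ 1{√T · D̂sup_T(u) ≤ τ} du`. -/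
def uhat (X : ℕ → ℕ → Ω → (Fin d → ℝ)) (ev : F → (Fin d → ℝ) → ℝ)
    (T : ℕ) (τ : ℝ) (ω : Ω) : ℝ :=
  ∫ u in Set.Ioc (0:ℝ) 1, (if Real.sqrt T * DsupT X ev T u ω ≤ τ then (1:ℝ) else 0)

/-- The gradual-change-point assumption. -/
def GradualChangePoint (P : Measure Ω) (Xap : ℝ → ℤ → Ω → (Fin d → ℝ))
    (ev : F → (Fin d → ℝ) → ℝ) (u0 κ cκ : ℝ) : Prop :=
  u0 ∈ Set.Ioo (0:ℝ) 1 ∧ 0 < κ ∧ 0 < cκ ∧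
  (∀ u ∈ Set.Icc (0:ℝ) u0, DsupLim P Xap ev u = 0) ∧
  (∀ u ∈ Set.Ioc u0 1, 0 < DsupLim P Xap ev u) ∧
  Tendsto (fun u => DsupLim P Xap ev u / (u - u0) ^ κ) (𝓝[>] u0) (𝓝 cκ)

/-- `Hmax(u) = sup_{f ∈ 𝓕} sup_{0 ≤ w ≤ v ≤ u} |H(v,w,f)|` for a limit process `H`. -/
def HmaxLim (H : ℝ → ℝ → F → Ω → ℝ) (u : ℝ) (ω : Ω) : ℝ :=
  sSup {x : ℝ | ∃ f : F, ∃ v w : ℝ, 0 ≤ w ∧ w ≤ v ∧ v ≤ u ∧ x = |H v w f ω|}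

/-- The `(1−α)`-quantile `q_α(u)` of `Hmax(u)`. -/
def quant (P : Measure Ω) (H : ℝ → ℝ → F → Ω → ℝ) (α u : ℝ) : ℝ :=
  sInf {x : ℝ | 1 - α ≤ (P {ω | HmaxLim H u ω ≤ x}).toReal}

/-- `H` is a centered Gaussian process on `Δ × 𝓕` with covariance kernel `K`. -/
def IsCenteredGaussianWithCov (P : Measure Ω) (H : ℝ → ℝ → F → Ω → ℝ)
    (K : ℝ → ℝ → F → ℝ → ℝ → F → ℝ) : Prop :=
  (∀ u v : ℝ, (u, v) ∈ DeltaSet → ∀ f : F, Measurable (H u v f)) ∧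
  (∀ u v : ℝ, (u, v) ∈ DeltaSet → ∀ f : F, ∫ ω, H u v f ω ∂P = 0) ∧
  (∀ u v u' v' : ℝ, (u, v) ∈ DeltaSet → (u', v') ∈ DeltaSet → ∀ f f' : F,
    ∫ ω, H u v f ω * H u' v' f' ω ∂P = K u v f u' v' f') ∧
  (∀ (n : ℕ) (a : Fin n → ℝ) (pu pv : Fin n → ℝ) (pf : Fin n → F),
    (∀ i, (pu i, pv i) ∈ DeltaSet) →
    ∃ σ2 : ℝ≥0,
      Measure.map (fun ω => ∑ i, a i * H (pu i) (pv i) (pf i) ω) P = gaussianReal 0 σ2)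


end GradualChangePaper

/-!
Cut `(0, u]` into the cells `((t - 1)/T, t/T]`, `1 ≤ t ≤ ⌊uT⌋`, and a remainder of length
less than `1/T`. On the `t`-th cell `E f(X_{t,T})` differs from the moment function by at most
`2C/T`, so the cells contribute at most `⌊uT⌋ · 2C/T² ≤ 2C/T` and the remainder at most `M/T`.
As `v/u ∈ [0, 1]`, the bias of `D̂_T` is at most twice this, and `√T · O(1/T) → 0`.
-/

namespace GradualChangePaper

section RiemannSum

variable {m : ℝ → ℝ} {u : ℝ}

lemma abs_mul_sub_intervalIntegral_le {a b c L : ℝ} (hab : a ≤ b)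
    (hm : IntervalIntegrable m volume a b) (h : ∀ w ∈ Set.Ioc a b, |c - m w| ≤ L) :
    |(b - a) * c - ∫ w in a..b, m w| ≤ L * (b - a) := by
  have hc : (b - a) * c = ∫ _ in a..b, c := by simp
  rw [hc, ← intervalIntegral.integral_sub intervalIntegrable_const hm]
  calc |∫ w in a..b, (c - m w)| ≤ L * |b - a| :=
        intervalIntegral.norm_integral_le_of_norm_le_const fun w hw =>
          (Real.norm_eq_abs _).trans_le (h w (Set.uIoc_of_le hab ▸ hw))
    _ = L * (b - a) := by rw [abs_of_nonneg (sub_nonneg.2 hab)]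

lemma integral_Ioc_eq_sum_add_intervalIntegral {T N : ℕ} (hu : 0 ≤ u) (hNu : (N : ℝ) / T ≤ u)
    (hm : IntegrableOn m (Set.Icc 0 u)) :
    ∫ w in Set.Ioc 0 u, m w
      = ∑ k ∈ Finset.range N, (∫ w in (k : ℝ) / T..((k + 1) / T), m w)
        + ∫ w in N / T..u, m w := by
  have hint : ∀ a b, 0 ≤ a → a ≤ u → 0 ≤ b → b ≤ u → IntervalIntegrable m volume a b :=
    fun a b ha hau hb hbu =>
      (hm.mono_set (Set.uIcc_subset_Icc ⟨ha, hau⟩ ⟨hb, hbu⟩)).intervalIntegrable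
  have hcells := intervalIntegral.sum_integral_adjacent_intervals (μ := volume) (f := m)
    (a := fun k : ℕ => (k : ℝ) / T) (n := N) fun k hk => by
      have hk : (k : ℝ) + 1 ≤ N := by exact_mod_cast hk
      have hk_le : ((k : ℝ) + 1) / T ≤ u := le_trans (by gcongr) hNu
      push_cast
      exact hint _ _ (by positivity) (le_trans (by gcongr; linarith) hk_le) (by positivity) hk_le
  push_cast at hcells
  rw [hcells, zero_div, intervalIntegral.integral_add_adjacent_intervals
    (hint _ _ le_rfl hu (by positivity) hNu) (hint _ _ (by positivity) hNu hu le_rfl),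
    intervalIntegral.integral_of_le hu]

lemma abs_div_sub_intervalIntegral_le {T k : ℕ} {c L : ℝ}
    (hm : IntegrableOn m (Set.Icc ((k : ℝ) / T) ((k + 1) / T)))
    (h : ∀ w ∈ Set.Ioc ((k : ℝ) / T) ((k + 1) / T), |c - m w| ≤ L) :
    |c / T - ∫ w in (k : ℝ) / T..((k + 1) / T), m w| ≤ L / T := by
  have hstep : (k : ℝ) / T ≤ (k + 1) / T := by gcongr; linarith
  have hcell := abs_mul_sub_intervalIntegral_le hstep
    (hm.mono_set (Set.uIcc_of_le hstep).subset).intervalIntegrable h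
  rwa [show ((k : ℝ) + 1) / T - k / T = 1 / T by ring, one_div_mul_eq_div, mul_one_div] at hcell

lemma abs_riemannSum_sub_integral_le {e : ℕ → ℝ} {T : ℕ} {L M : ℝ} (hT : 0 < T) (hu : 0 ≤ u)
    (hm : IntegrableOn m (Set.Icc 0 u)) (hM : 0 ≤ M) (hmM : ∀ w ∈ Set.Ioc 0 u, |m w| ≤ M)
    (he : ∀ k < ⌊u * T⌋₊, ∀ w ∈ Set.Ioc ((k : ℝ) / T) ((k + 1) / T), |e (k + 1) - m w| ≤ L) :
    |(1 / (T : ℝ)) * ∑ t ∈ Finset.Icc 1 ⌊u * T⌋₊, e t - ∫ w in Set.Ioc 0 u, m w|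
      ≤ (⌊u * T⌋₊ * L + M) / T := by
  set N := ⌊u * T⌋₊
  have hT₀ : (0 : ℝ) < T := by exact_mod_cast hT
  have hNu : (N : ℝ) / T ≤ u := (div_le_iff₀ hT₀).2 (Nat.floor_le (by positivity))
  have hu_lt : u < (N : ℝ) / T + 1 / T := by
    rw [← add_div, lt_div_iff₀ hT₀]; exact Nat.lt_floor_add_one _
  have hreindex : (1 / (T : ℝ)) * ∑ t ∈ Finset.Icc 1 N, e t
      = ∑ k ∈ Finset.range N, e (k + 1) / T := by
    rw [Finset.mul_sum, ← Finset.Ico_add_one_right_eq_Icc, Finset.sum_Ico_eq_sum_range]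
    refine Finset.sum_congr (by simp) fun k _ => ?_
    rw [add_comm 1 k, one_div_mul_eq_div]
  have hcell : ∀ k ∈ Finset.range N,
      |e (k + 1) / T - ∫ w in (k : ℝ) / T..((k + 1) / T), m w| ≤ L / T := fun k hk => by
    have hkN : (k : ℝ) + 1 ≤ N := by exact_mod_cast Finset.mem_range.1 hk
    exact abs_div_sub_intervalIntegral_le (hm.mono_set (Set.Icc_subset_Icc (by positivity)
      (le_trans (by gcongr) hNu))) (he k (Finset.mem_range.1 hk))
  have htail : |∫ w in N / T..u, m w| ≤ M / T := by
    calc |∫ w in N / T..u, m w| ≤ M * |u - N / T| :=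
          intervalIntegral.norm_integral_le_of_norm_le_const fun w hw =>
            (Real.norm_eq_abs _).trans_le (hmM w ?_)
      _ ≤ M * (1 / T) := by
          gcongr
          rw [abs_of_nonneg (sub_nonneg.2 hNu)]
          linarith
      _ = M / T := mul_one_div M T
    rw [Set.uIoc_of_le hNu] at hw
    exact ⟨lt_of_le_of_lt (by positivity) hw.1, hw.2⟩
  rw [integral_Ioc_eq_sum_add_intervalIntegral hu hNu hm, hreindex, ← sub_sub,
    ← Finset.sum_sub_distrib]
  calc _ ≤ ∑ k ∈ Finset.range N, |e (k + 1) / T - ∫ w in (k : ℝ) / T..((k + 1) / T), m w|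
          + |∫ w in N / T..u, m w| :=
        (abs_sub _ _).trans (add_le_add_left (Finset.abs_sum_le_sum_abs _ _) _)
    _ ≤ ∑ _k ∈ Finset.range N, L / T + M / T := by gcongr with k hk; exact hcell k hk
    _ = (N * L + M) / T := by
        simp only [Finset.sum_const, Finset.card_range, nsmul_eq_mul]; ring

lemma abs_riemannSum_sub_integral_le_of_approx {e : ℕ → ℝ} {T : ℕ} {C M : ℝ} (hC : 0 ≤ C)
    (hM : 0 ≤ M) (hm : Measurable m)
    (happrox : ∀ t, 1 ≤ t → t ≤ T → ∀ w ∈ Set.Icc (0 : ℝ) 1,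
      |e t - m w| ≤ C * (|(t : ℝ) / T - w| + 1 / T))
    (hmM : ∀ w ∈ Set.Icc (0 : ℝ) 1, |m w| ≤ M) (hT : 1 ≤ T) (hu : u ∈ Set.Icc (0 : ℝ) 1) :
    |(1 / (T : ℝ)) * ∑ t ∈ Finset.Icc 1 ⌊u * T⌋₊, e t - ∫ w in Set.Ioc 0 u, m w|
      ≤ (2 * C + M) / T := by
  obtain ⟨hu0, hu1⟩ := hu
  have hT₀ : (0 : ℝ) < T := by exact_mod_cast hT
  have hNT : ⌊u * T⌋₊ ≤ T := Nat.floor_le_of_le (by nlinarith)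
  have hm_int : IntegrableOn m (Set.Icc 0 u) :=
    Measure.integrableOn_of_bounded (M := M) measure_Icc_lt_top.ne hm.aestronglyMeasurable
      ((ae_restrict_iff' measurableSet_Icc).2 (ae_of_all _ fun w hw =>
        (Real.norm_eq_abs _).trans_le (hmM w ⟨hw.1, hw.2.trans hu1⟩)))
  have hcell : ∀ k < ⌊u * T⌋₊, ∀ w ∈ Set.Ioc ((k : ℝ) / T) ((k + 1) / T),
      |e (k + 1) - m w| ≤ 2 * C / T := fun k hk w hw => by
    have hkT : ((k : ℝ) + 1) / T ≤ 1 := (div_le_one hT₀).2 (by exact_mod_cast hk.trans_le hNT)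
    have hdist : |((k : ℝ) + 1) / T - w| ≤ 1 / T := by
      have hw₂ : w ≤ k / T + 1 / T := add_div (k : ℝ) 1 T ▸ hw.2
      rw [abs_le, add_div]
      constructor <;> linarith [hw.1, div_nonneg zero_le_one hT₀.le]
    calc |e (k + 1) - m w| ≤ C * (|((k + 1 : ℕ) : ℝ) / T - w| + 1 / T) :=
          happrox (k + 1) (by omega) (by omega) w
            ⟨(by positivity : (0 : ℝ) ≤ k / T).trans hw.1.le, hw.2.trans hkT⟩
      _ ≤ C * (1 / T + 1 / T) := by push_cast; gcongr
      _ = 2 * C / T := by ring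
  calc _ ≤ (⌊u * T⌋₊ * (2 * C / T) + M) / T :=
        abs_riemannSum_sub_integral_le (by omega) hu0 hm_int hM
          (fun w hw => hmM w ⟨hw.1.le, hw.2.trans hu1⟩) hcell
    _ ≤ (T * (2 * C / T) + M) / T := by gcongr
    _ = (2 * C + M) / T := by field_simp

end RiemannSum

lemma tendsto_sSup_of_nonneg_of_le {α : Type*} {l : Filter α} {S : α → Set ℝ} {b : α → ℝ}
    (hS : ∀ a, ∀ x ∈ S a, 0 ≤ x) (hSb : ∀ᶠ a in l, ∀ x ∈ S a, x ≤ b a) (hb₀ : ∀ a, 0 ≤ b a)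
    (hb : Tendsto b l (𝓝 0)) :
    Tendsto (fun a => sSup (S a)) l (𝓝 0) :=
  squeeze_zero' (Eventually.of_forall fun a => Real.sSup_nonneg (hS a))
    (hSb.mono fun a ha => Real.sSup_le ha (hb₀ a)) hb

lemma tendsto_sqrt_mul_div_natCast (c : ℝ) :
    Tendsto (fun T : ℕ => √(T : ℝ) * (c / T)) atTop (𝓝 0) := by
  have h : Tendsto (fun T : ℕ => c / √(T : ℝ)) atTop (𝓝 0) :=
    tendsto_const_nhds.div_atTop (Real.tendsto_sqrt_atTop.comp tendsto_natCast_atTop_atTop)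
  refine h.congr fun T => ?_
  rw [mul_div_left_comm, Real.sqrt_div_self', mul_one_div]

section Bias

variable {Ω : Type} [MeasurableSpace Ω] {P : Measure Ω} {d : ℕ} {X : ℕ → ℕ → Ω → (Fin d → ℝ)}
  {Xap : ℝ → ℤ → Ω → (Fin d → ℝ)} {F : Type} {ev : F → (Fin d → ℝ) → ℝ} {T : ℕ} {f : F}

lemma integral_Dhat (hX : ∀ t, Integrable (fun ω => ev f (X T t ω)) P) (u v : ℝ) :
    ∫ ω, Dhat X ev T u v f ω ∂P
      = (1 / (T : ℝ)) * ∑ t ∈ Finset.Icc 1 ⌊v * T⌋₊, ∫ ω, ev f (X T t ω) ∂P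
        - (v / u) * ((1 / (T : ℝ)) * ∑ t ∈ Finset.Icc 1 ⌊u * T⌋₊, ∫ ω, ev f (X T t ω) ∂P) := by
  have hsum : ∀ w : ℝ, Integrable
      (fun ω => (1 / (T : ℝ)) * ∑ t ∈ Finset.Icc 1 ⌊w * T⌋₊, ev f (X T t ω)) P :=
    fun w => (integrable_finsetSum _ fun t _ => hX t).const_mul _
  simp only [Dhat]
  rw [integral_sub (hsum v) ((hsum u).const_mul _), integral_const_mul, integral_const_mul,
    integral_const_mul, integral_finsetSum _ fun t _ => hX t,
    integral_finsetSum _ fun t _ => hX t]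

lemma abs_integral_Dhat_sub_Dlim_le (hX : ∀ t, Integrable (fun ω => ev f (X T t ω)) P) {ε : ℝ}
    (hbias : ∀ u ∈ Set.Icc (0 : ℝ) 1,
      |(1 / (T : ℝ)) * ∑ t ∈ Finset.Icc 1 ⌊u * T⌋₊, ∫ ω, ev f (X T t ω) ∂P
        - ∫ w in Set.Ioc 0 u, mfun P Xap ev f w| ≤ ε)
    {u v : ℝ} (huv : (u, v) ∈ DeltaSet) :
    |∫ ω, Dhat X ev T u v f ω ∂P - Dlim P Xap ev u v f| ≤ 2 * ε := by
  obtain ⟨hv0, hvu, hu1⟩ := huv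
  -- `v / u ∈ [0, 1]` also at `u = 0`, where it is `0`
  have hr₀ : 0 ≤ v / u := div_nonneg hv0 (hv0.trans hvu)
  have hr₁ : v / u ≤ 1 := div_le_one_of_le₀ hvu (hv0.trans hvu)
  have hv := hbias v ⟨hv0, hvu.trans hu1⟩
  have hu := hbias u ⟨hv0.trans hvu, hu1⟩
  rw [integral_Dhat hX, Dlim]
  set Sv := (1 / (T : ℝ)) * ∑ t ∈ Finset.Icc 1 ⌊v * T⌋₊, ∫ ω, ev f (X T t ω) ∂P
  set Su := (1 / (T : ℝ)) * ∑ t ∈ Finset.Icc 1 ⌊u * T⌋₊, ∫ ω, ev f (X T t ω) ∂P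
  set Iv := ∫ w in Set.Ioc 0 v, mfun P Xap ev f w
  set Iu := ∫ w in Set.Ioc 0 u, mfun P Xap ev f w
  calc |Sv - v / u * Su - (Iv - v / u * Iu)| = |(Sv - Iv) - v / u * (Su - Iu)| := by ring_nf
    _ ≤ |Sv - Iv| + v / u * |Su - Iu| := by
        rw [← abs_of_nonneg hr₀, ← abs_mul, abs_of_nonneg hr₀]; exact abs_sub _ _
    _ ≤ ε + 1 * ε := by gcongr
    _ = 2 * ε := by ring

end Bias

/-- Under the local moment-approximation inequality and uniform
boundedness of the moment functions, the Riemann-sum bias is of order `1/T` uniformly,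
with a constant depending only on `C` and `M`; in particular
`√T · sup_{(u,v,f) ∈ Δ×𝓕} |E[D̂_T(u,v,f)] − D(u,v,f)| → 0`. -/
theorem bias_of_Dhat_is_uniformly_O_one_over_T
    (C M : ℝ) (hC : 0 < C) (hM : 0 ≤ M) :
    ∃ C' : ℝ, ∀ (Ω : Type) [MeasurableSpace Ω] (P : Measure Ω),
      IsProbabilityMeasure P →
      ∀ (d : ℕ) (X : ℕ → ℕ → Ω → (Fin d → ℝ)) (Xap : ℝ → ℤ → Ω → (Fin d → ℝ))
        (F : Type) (ev : F → (Fin d → ℝ) → ℝ),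
      (∀ (f : F) (T t : ℕ), Integrable (fun ω => ev f (X T t ω)) P) →
      (∀ (f : F) (u : ℝ), Integrable (fun ω => ev f (Xap u 0 ω)) P) →
      (∀ f : F, Measurable (fun w => mfun P Xap ev f w)) →
      -- the local approximation inequality for the moments
      (∀ (T t : ℕ), 1 ≤ t → t ≤ T → ∀ u ∈ Set.Icc (0:ℝ) 1, ∀ f : F,
        |(∫ ω, ev f (X T t ω) ∂P) - mfun P Xap ev f u|
          ≤ C * (|(t : ℝ) / T - u| + 1 / T)) →
      -- uniform boundedness of the moment functions
      (∀ (f : F), ∀ w ∈ Set.Icc (0:ℝ) 1, |mfun P Xap ev f w| ≤ M) →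
      ((∀ T : ℕ, 1 ≤ T → ∀ u ∈ Set.Icc (0:ℝ) 1, ∀ f : F,
          |(1 / (T:ℝ)) * (∑ t ∈ Finset.Icc 1 ⌊u * (T:ℝ)⌋₊, ∫ ω, ev f (X T t ω) ∂P)
              - ∫ w in Set.Ioc (0:ℝ) u, mfun P Xap ev f w| ≤ C' / T) ∧
        Tendsto (fun T : ℕ =>
            sSup {x : ℝ | ∃ u v : ℝ, ∃ f : F, (u, v) ∈ DeltaSet ∧
              x = Real.sqrt T *
                |(∫ ω, Dhat X ev T u v f ω ∂P) - Dlim P Xap ev u v f|})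
          atTop (𝓝 0)) := by
  refine ⟨2 * C + M, fun Ω _ P _ d X Xap F ev hX _ hmeas happrox hbound => ?_⟩
  have hbias : ∀ T : ℕ, 1 ≤ T → ∀ u ∈ Set.Icc (0:ℝ) 1, ∀ f : F,
      |(1 / (T:ℝ)) * (∑ t ∈ Finset.Icc 1 ⌊u * (T:ℝ)⌋₊, ∫ ω, ev f (X T t ω) ∂P)
        - ∫ w in Set.Ioc (0:ℝ) u, mfun P Xap ev f w| ≤ (2 * C + M) / T :=
    fun T hT u hu f => abs_riemannSum_sub_integral_le_of_approx hC.le hM (hmeas f)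
      (fun t ht htT w hw => happrox T t ht htT w hw f) (hbound f) hT hu
  refine ⟨hbias, tendsto_sSup_of_nonneg_of_le (b := fun T : ℕ => √(T : ℝ) * (2 * (2 * C + M) / T))
    ?_ ?_ (fun T => by positivity) (tendsto_sqrt_mul_div_natCast _)⟩
  · rintro T x ⟨u, v, f, -, rfl⟩
    positivity
  · filter_upwards [eventually_ge_atTop 1] with T hT
    rintro x ⟨u, v, f, huv, rfl⟩
    gcongr
    exact (abs_integral_Dhat_sub_Dlim_le (hX f T) (fun u hu => hbias T hT u hu f) huv).trans_eq
      (mul_div_assoc _ _ _).symm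

end GradualChangePaper
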